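/- arXiv:2511.08544 — 2 statements merged into one kernel-verified Lean document; each statement's English description precedes it below -/
import Mathlib

section
/- Isotropic Gaussian minimizes Fisher information under a trace constraint: fix t > 0 and let p range over all continuously differentiable, strictly positive probability densities on ℝ^d with mean zero, finite positive-definite covariance Σ satisfying tr(Σ) = t, square-integrable score (J(p) < ∞), and x_j p(x) → 0 as ‖x‖ → ∞ for each coordinate j. Then J(p) ≥ d²/t, and equality holds if and only if p is the density of the isotropic Gaussian N(0, (t/d) I_d). -/
open MeasureTheory Matrix BigOperators

/-- The density of the centered Gaussian `N(0, Σ)` on `ℝ^d`. -/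
noncomputable def gaussDensity {d : ℕ} (S : Matrix (Fin d) (Fin d) ℝ)
    (x : EuclideanSpace ℝ (Fin d)) : ℝ :=
  (2 * Real.pi) ^ (-(d : ℝ) / 2) * S.det ^ (-(1 : ℝ) / 2) *
    Real.exp (-(∑ i, ∑ j, x i * S⁻¹ i j * x j) / 2)

/-!
With `c = d / t`, integrating by parts one coordinate at a time gives `∫ ⟪∇p x, x⟫ = -d`, hence
`0 ≤ ∫ ‖∇ log p x + c • x‖² p x = J(p) - 2 c d + c² t = J(p) - d² / t`.
Since the integrand is continuous and `p > 0`, equality forces `∇ log p x = -c • x` everywhere;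
then `log p x + c ‖x‖² / 2` is constant, and the normalization `∫ p = 1` leaves only the
isotropic Gaussian.
-/

open Real InnerProductSpace RealInnerProductSpace

theorem Continuous.integral_eq_zero_iff_of_nonneg {X : Type*} [TopologicalSpace X]
    [MeasurableSpace X] [OpensMeasurableSpace X] {μ : Measure X} [μ.IsOpenPosMeasure]
    {f : X → ℝ} (hf : Continuous f) (hf0 : 0 ≤ f) (hfi : Integrable f μ) :
    ∫ x, f x ∂μ = 0 ↔ f = 0 := by
  rw [MeasureTheory.integral_eq_zero_iff_of_nonneg hf0 hfi]
  exact hf.ae_eq_iff_eq μ continuous_zero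

section Score

variable {E : Type*} [NormedAddCommGroup E] [InnerProductSpace ℝ E] [CompleteSpace E]
  {p : E → ℝ}

theorem fderiv_apply_eq_mul_inner_gradient_log {x : E} (hp : DifferentiableAt ℝ p x)
    (hx : p x ≠ 0) (v : E) :
    fderiv ℝ p x v = p x * ⟪gradient (fun y => log (p y)) x, v⟫ := by
  rw [gradient, toDual_symm_apply, (hp.hasFDerivAt.log hx).fderiv]
  simp [hx]

theorem continuous_gradient_log (hp : ContDiff ℝ 1 p) (hpos : ∀ x, p x ≠ 0) :
    Continuous (gradient fun y => log (p y)) :=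
  (toDual ℝ E).symm.continuous.comp ((hp.log hpos).continuous_fderiv one_ne_zero)

theorem norm_gradient_log_add_smul_sq_mul {x : E} (hp : DifferentiableAt ℝ p x)
    (hx : p x ≠ 0) (c : ℝ) :
    ‖gradient (fun y => log (p y)) x + c • x‖ ^ 2 * p x =
      ‖gradient (fun y => log (p y)) x‖ ^ 2 * p x + 2 * c * fderiv ℝ p x x +
        c ^ 2 * (‖x‖ ^ 2 * p x) := by
  rw [fderiv_apply_eq_mul_inner_gradient_log hp hx, norm_add_sq_real, real_inner_smul_right,
    norm_smul, mul_pow, Real.norm_eq_abs, sq_abs]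
  ring

variable [MeasurableSpace E] [BorelSpace E] {μ : Measure E}

theorem integrable_fderiv_apply_of_integrable_sq_mul (hp : ContDiff ℝ 1 p)
    (hpos : ∀ x, 0 < p x)
    (hJ : Integrable (fun x => ‖gradient (fun y => log (p y)) x‖ ^ 2 * p x) μ)
    {g : E → E} (hg : Continuous g) (hg2 : Integrable (fun x => ‖g x‖ ^ 2 * p x) μ) :
    Integrable (fun x => fderiv ℝ p x (g x)) μ := by
  refine ((hJ.add hg2).div_const 2).mono'
    ((hp.continuous_fderiv one_ne_zero).clm_apply hg).aestronglyMeasurable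
    (.of_forall fun x => ?_)
  set u := gradient (fun y => log (p y)) x
  have hpx := (hpos x).le
  have hCS : p x * |⟪u, g x⟫| ≤ p x * (‖u‖ * ‖g x‖) :=
    mul_le_mul_of_nonneg_left (abs_real_inner_le_norm u (g x)) hpx
  rw [Real.norm_eq_abs, fderiv_apply_eq_mul_inner_gradient_log
    (hp.differentiable one_ne_zero x) (hpos x).ne', abs_mul, abs_of_pos (hpos x)]
  dsimp only [Pi.add_apply]
  nlinarith [mul_nonneg hpx (sq_nonneg (‖u‖ - ‖g x‖))]

theorem integrable_norm_gradient_log_add_smul_sq_mul (hp : ContDiff ℝ 1 p)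
    (hpos : ∀ x, 0 < p x)
    (hJ : Integrable (fun x => ‖gradient (fun y => log (p y)) x‖ ^ 2 * p x) μ)
    (hx2 : Integrable (fun x => ‖x‖ ^ 2 * p x) μ) (c : ℝ) :
    Integrable (fun x => ‖gradient (fun y => log (p y)) x + c • x‖ ^ 2 * p x) μ := by
  simp_rw [norm_gradient_log_add_smul_sq_mul (hp.differentiable one_ne_zero _) (hpos _).ne']
  have hdp := integrable_fderiv_apply_of_integrable_sq_mul hp hpos hJ continuous_id' hx2
  exact (hJ.add (hdp.const_mul _)).add (hx2.const_mul _)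

theorem integral_norm_gradient_log_add_smul_sq_mul (hp : ContDiff ℝ 1 p)
    (hpos : ∀ x, 0 < p x)
    (hJ : Integrable (fun x => ‖gradient (fun y => log (p y)) x‖ ^ 2 * p x) μ)
    (hx2 : Integrable (fun x => ‖x‖ ^ 2 * p x) μ) (c : ℝ) :
    ∫ x, ‖gradient (fun y => log (p y)) x + c • x‖ ^ 2 * p x ∂μ =
      ∫ x, ‖gradient (fun y => log (p y)) x‖ ^ 2 * p x ∂μ + 2 * c * ∫ x, fderiv ℝ p x x ∂μ +
        c ^ 2 * ∫ x, ‖x‖ ^ 2 * p x ∂μ := by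
  have hdp : Integrable (fun x => 2 * c * fderiv ℝ p x x) μ :=
    (integrable_fderiv_apply_of_integrable_sq_mul hp hpos hJ continuous_id' hx2).const_mul _
  have h12 : Integrable (fun x => ‖gradient (fun y => log (p y)) x‖ ^ 2 * p x +
      2 * c * fderiv ℝ p x x) μ :=
    hJ.add hdp
  simp_rw [norm_gradient_log_add_smul_sq_mul (hp.differentiable one_ne_zero _) (hpos _).ne']
  rw [integral_add h12 (hx2.const_mul _), integral_add hJ hdp, integral_const_mul,
    integral_const_mul]

theorem integral_norm_gradient_log_add_smul_sq_mul_eq_zero_iff [μ.IsOpenPosMeasure]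
    (hp : ContDiff ℝ 1 p) (hpos : ∀ x, 0 < p x)
    (hJ : Integrable (fun x => ‖gradient (fun y => log (p y)) x‖ ^ 2 * p x) μ)
    (hx2 : Integrable (fun x => ‖x‖ ^ 2 * p x) μ) (c : ℝ) :
    ∫ x, ‖gradient (fun y => log (p y)) x + c • x‖ ^ 2 * p x ∂μ = 0 ↔
      ∀ x, gradient (fun y => log (p y)) x = -c • x := by
  have hcont : Continuous fun x => ‖gradient (fun y => log (p y)) x + c • x‖ ^ 2 * p x :=
    (((continuous_gradient_log hp fun x => (hpos x).ne').add
      (continuous_const_smul _)).norm.pow 2).mul hp.continuous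
  rw [hcont.integral_eq_zero_iff_of_nonneg (fun x => mul_nonneg (sq_nonneg _) (hpos x).le)
    (integrable_norm_gradient_log_add_smul_sq_mul hp hpos hJ hx2 c), funext_iff]
  simp [(hpos _).ne', add_eq_zero_iff_eq_neg]

end Score

section Euclidean

variable {ι : Type*} [Fintype ι] {p : EuclideanSpace ℝ ι → ℝ}

theorem norm_sq_mul_eq_sum (x : EuclideanSpace ℝ ι) :
    ‖x‖ ^ 2 * p x = ∑ i, x i * x i * p x := by
  rw [EuclideanSpace.real_norm_sq_eq, Finset.sum_mul]
  simp only [sq]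

theorem integrable_norm_sq_mul
    (hint : ∀ i, Integrable fun x : EuclideanSpace ℝ ι => x i * x i * p x) :
    Integrable fun x => ‖x‖ ^ 2 * p x := by
  simp_rw [norm_sq_mul_eq_sum]
  exact integrable_finsetSum _ fun i _ => hint i

theorem integral_norm_sq_mul_eq_trace (S : Matrix ι ι ℝ)
    (hcov : ∀ i, ∫ x : EuclideanSpace ℝ ι, x i * x i * p x = S i i)
    (hint : ∀ i, Integrable fun x : EuclideanSpace ℝ ι => x i * x i * p x) :
    ∫ x, ‖x‖ ^ 2 * p x = S.trace := by
  simp_rw [norm_sq_mul_eq_sum]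
  rw [integral_finsetSum _ fun i _ => hint i]
  exact Finset.sum_congr rfl fun i _ => hcov i

variable [DecidableEq ι]

theorem integral_coord_mul_fderiv_single (hp : Differentiable ℝ p) (hpi : Integrable p) (j : ι)
    (hxp : Integrable fun x : EuclideanSpace ℝ ι => x j * p x)
    (hxdp : Integrable fun x => x j * fderiv ℝ p x (EuclideanSpace.single j 1)) :
    ∫ x, x j * fderiv ℝ p x (EuclideanSpace.single j 1) = -∫ x, p x := by
  have hcoord : ∀ x, fderiv ℝ (fun y : EuclideanSpace ℝ ι => y j) x = EuclideanSpace.proj j :=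
    fun x => (EuclideanSpace.proj (𝕜 := ℝ) j).fderiv
  rw [integral_mul_fderiv_eq_neg_fderiv_mul_of_integrable (by simpa [hcoord] using hpi) hxdp hxp
    (fun x _ => (EuclideanSpace.proj (𝕜 := ℝ) j).differentiableAt) (fun x _ => hp x)]
  simp [hcoord]

theorem integrable_coord_mul_fderiv_single (hp : ContDiff ℝ 1 p) (hpos : ∀ x, 0 < p x)
    (hJ : Integrable fun x => ‖gradient (fun y => log (p y)) x‖ ^ 2 * p x) (j : ι)
    (hint : Integrable fun x : EuclideanSpace ℝ ι => x j * x j * p x) :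
    Integrable fun x => x j * fderiv ℝ p x (EuclideanSpace.single j 1) := by
  have hg : Continuous fun x : EuclideanSpace ℝ ι => x j • EuclideanSpace.single j (1 : ℝ) :=
    (EuclideanSpace.proj (𝕜 := ℝ) j).continuous.smul continuous_const
  refine (integrable_fderiv_apply_of_integrable_sq_mul hp hpos hJ hg ?_).congr
    (.of_forall fun x => ?_)
  · refine hint.congr (.of_forall fun x => ?_)
    simp [norm_smul, sq]
  · simp

theorem integral_fderiv_apply_self (hp : ContDiff ℝ 1 p) (hpos : ∀ x, 0 < p x)
    (hJ : Integrable fun x => ‖gradient (fun y => log (p y)) x‖ ^ 2 * p x) (hpi : Integrable p)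
    (hxp : ∀ j, Integrable fun x : EuclideanSpace ℝ ι => x j * p x)
    (hint : ∀ j, Integrable fun x : EuclideanSpace ℝ ι => x j * x j * p x) :
    ∫ x, fderiv ℝ p x x = -(Fintype.card ι) * ∫ x, p x := by
  have hxdp := fun j => integrable_coord_mul_fderiv_single hp hpos hJ j (hint j)
  have hsum : ∀ (L : EuclideanSpace ℝ ι →L[ℝ] ℝ) x,
      L x = ∑ j, x j * L (EuclideanSpace.single j 1) := by
    intro L x
    conv_lhs => rw [← (EuclideanSpace.basisFun ι ℝ).sum_repr x]
    simp [EuclideanSpace.basisFun_apply]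
  rw [integral_congr_ae (.of_forall fun x => hsum (fderiv ℝ p x) x),
    integral_finsetSum _ fun j _ => hxdp j]
  simp [integral_coord_mul_fderiv_single (hp.differentiable one_ne_zero) hpi _ (hxp _) (hxdp _)]

end Euclidean

section Gaussian

variable {E : Type*} [NormedAddCommGroup E] [InnerProductSpace ℝ E]

theorem eq_mul_exp_of_gradient_log_eq_neg_smul [CompleteSpace E] {p : E → ℝ}
    (hp : Differentiable ℝ p) (hpos : ∀ x, 0 < p x) {s : ℝ}
    (hgrad : ∀ x, gradient (fun y => log (p y)) x = -s⁻¹ • x) (x : E) :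
    p x = p 0 * exp (-(2 * s)⁻¹ * ‖x‖ ^ 2) := by
  have hf : ∀ y, HasFDerivAt (fun y : E => log (p y) + (2 * s)⁻¹ * ‖y‖ ^ 2)
      (0 : E →L[ℝ] ℝ) y := by
    intro y
    have hlog : HasFDerivAt (fun y => log (p y)) (toDual ℝ E (-s⁻¹ • y)) y := by
      rw [← hgrad y, toDual_gradient]
      exact ((hp y).log (hpos y).ne').hasFDerivAt
    have hsq := (hasStrictFDerivAt_norm_sq y).hasFDerivAt.const_mul (2 * s)⁻¹
    refine (hlog.add hsq).congr_fderiv ?_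
    ext v
    simp only [_root_.add_apply, _root_.smul_apply, _root_.zero_apply, toDual_apply_apply,
      coe_innerSL_apply, smul_eq_mul, nsmul_eq_mul, real_inner_smul_left]
    ring
  have hconst := is_const_of_fderiv_eq_zero (fun y => (hf y).differentiableAt)
    (fun y => (hf y).fderiv) x 0
  simp only [norm_zero] at hconst
  rw [← exp_log (hpos x), ← exp_log (hpos 0), ← exp_add]
  congr 1
  linarith

theorem gradient_log_const_mul_exp [CompleteSpace E] {K : ℝ} (hK : 0 < K) (s : ℝ) (x : E) :
    gradient (fun y => log (K * exp (-(2 * s)⁻¹ * ‖y‖ ^ 2))) x = -s⁻¹ • x := by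
  have hlog : (fun y : E => log (K * exp (-(2 * s)⁻¹ * ‖y‖ ^ 2))) =
      fun y => log K + -(2 * s)⁻¹ * ‖y‖ ^ 2 := by
    funext y
    rw [log_mul hK.ne' (exp_pos _).ne', log_exp]
  rw [hlog]
  apply HasGradientAt.gradient
  rw [hasGradientAt_iff_hasFDerivAt]
  have hsq := (hasStrictFDerivAt_norm_sq x).hasFDerivAt.const_mul (-(2 * s)⁻¹)
  refine (hsq.const_add (log K)).congr_fderiv ?_
  ext v
  simp only [_root_.smul_apply, toDual_apply_apply, coe_innerSL_apply, smul_eq_mul, nsmul_eq_mul,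
    real_inner_smul_left]
  ring

theorem eq_rpow_of_integral_mul_exp_eq_one [MeasurableSpace E] [BorelSpace E]
    [FiniteDimensional ℝ E] {K s : ℝ} (hs : 0 < s)
    (h : ∫ x : E, K * exp (-(2 * s)⁻¹ * ‖x‖ ^ 2) = 1) :
    K = (2 * π * s) ^ (-(Module.finrank ℝ E : ℝ) / 2) := by
  have hbase : π / (2 * s)⁻¹ = 2 * π * s := by field_simp
  rw [integral_const_mul, GaussianFourier.integral_rexp_neg_mul_sq_norm (by positivity),
    hbase] at h
  rw [neg_div, rpow_neg (by positivity)]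
  exact eq_inv_of_mul_eq_one_left h

end Gaussian

theorem gaussDensity_smul_one {d : ℕ} {s : ℝ} (hs : 0 < s) (x : EuclideanSpace ℝ (Fin d)) :
    gaussDensity (s • (1 : Matrix (Fin d) (Fin d) ℝ)) x =
      (2 * π * s) ^ (-(d : ℝ) / 2) * exp (-(2 * s)⁻¹ * ‖x‖ ^ 2) := by
  have hinv : (s • (1 : Matrix (Fin d) (Fin d) ℝ))⁻¹ = s⁻¹ • 1 :=
    Matrix.inv_eq_left_inv (by rw [smul_mul_smul, inv_mul_cancel₀ hs.ne', one_mul, one_smul])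
  have hquad : ∑ i, ∑ j, x i * (s⁻¹ • (1 : Matrix (Fin d) (Fin d) ℝ)) i j * x j =
      s⁻¹ * ‖x‖ ^ 2 := by
    rw [EuclideanSpace.real_norm_sq_eq, Finset.mul_sum]
    simp only [Matrix.smul_apply, Matrix.one_apply, smul_eq_mul, mul_ite, mul_one, mul_zero,
      ite_mul, zero_mul, Finset.sum_ite_eq, Finset.mem_univ, if_true]
    exact Finset.sum_congr rfl fun i _ => by ring
  rw [gaussDensity, hinv, hquad, Matrix.det_smul, Matrix.det_one, mul_one, Fintype.card_fin,
    ← rpow_natCast, ← rpow_mul hs.le, mul_rpow (by positivity) hs.le]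
  congr 3 <;> ring

theorem gradient_log_eq_neg_smul_iff_eq_gaussDensity {d : ℕ}
    {p : EuclideanSpace ℝ (Fin d) → ℝ} (hp : Differentiable ℝ p) (hpos : ∀ x, 0 < p x)
    (hprob : ∫ x, p x = 1) {s : ℝ} (hs : 0 < s) :
    (∀ x, gradient (fun y => log (p y)) x = -s⁻¹ • x) ↔
      p = gaussDensity (s • (1 : Matrix (Fin d) (Fin d) ℝ)) := by
  rw [funext_iff.mpr (gaussDensity_smul_one hs)]
  constructor
  · intro hgrad
    have hp0 : p 0 = (2 * π * s) ^ (-(d : ℝ) / 2) := by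
      rw [funext (eq_mul_exp_of_gradient_log_eq_neg_smul hp hpos hgrad)] at hprob
      simpa using eq_rpow_of_integral_mul_exp_eq_one hs hprob
    funext x
    rw [eq_mul_exp_of_gradient_log_eq_neg_smul hp hpos hgrad x, hp0]
  · rintro rfl
    exact gradient_log_const_mul_exp (by positivity) s

theorem fisher_information_min_trace_constraint_general
    {d : ℕ} (hd : 0 < d) (t : ℝ) (ht : 0 < t)
    (p : EuclideanSpace ℝ (Fin d) → ℝ)
    (hsmooth : ContDiff ℝ 1 p) (hpos : ∀ x, 0 < p x)
    (hprob : (∫ x, p x) = 1)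
    (S : Matrix (Fin d) (Fin d) ℝ)
    (hmeanInt : ∀ i, Integrable (fun x : EuclideanSpace ℝ (Fin d) => x i * p x))
    (hcov : ∀ i j, (∫ x : EuclideanSpace ℝ (Fin d), x i * x j * p x) = S i j)
    (hcovInt : ∀ i j, Integrable (fun x : EuclideanSpace ℝ (Fin d) => x i * x j * p x))
    (htr : S.trace = t)
    (hJ : Integrable (fun x : EuclideanSpace ℝ (Fin d) =>
      ‖gradient (fun y => Real.log (p y)) x‖ ^ 2 * p x)) :
    (∫ x, ‖gradient (fun y => Real.log (p y)) x‖ ^ 2 * p x) ≥ (d : ℝ) ^ 2 / t ∧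
      ((∫ x, ‖gradient (fun y => Real.log (p y)) x‖ ^ 2 * p x) = (d : ℝ) ^ 2 / t ↔
        p = gaussDensity ((t / d) • (1 : Matrix (Fin d) (Fin d) ℝ))) := by
  have hs : 0 < t / d := by positivity
  have hdiag := fun i => hcovInt i i
  have hx2 := integrable_norm_sq_mul hdiag
  have hstein : ∫ x, fderiv ℝ p x x = -d := by
    simp [integral_fderiv_apply_self hsmooth hpos hJ (integrable_of_integral_eq_one hprob)
      hmeanInt hdiag, hprob]
  have hsecond : ∫ x, ‖x‖ ^ 2 * p x = t :=
    (integral_norm_sq_mul_eq_trace S (fun i => hcov i i) hdiag).trans htr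
  have hdefect : ∫ x, ‖gradient (fun y => log (p y)) x + (t / d)⁻¹ • x‖ ^ 2 * p x =
      (∫ x, ‖gradient (fun y => log (p y)) x‖ ^ 2 * p x) - d ^ 2 / t := by
    rw [integral_norm_gradient_log_add_smul_sq_mul hsmooth hpos hJ hx2, hstein, hsecond]
    field_simp
    ring
  have hnonneg : 0 ≤ ∫ x, ‖gradient (fun y => log (p y)) x + (t / d)⁻¹ • x‖ ^ 2 * p x :=
    integral_nonneg fun x => mul_nonneg (sq_nonneg _) (hpos x).le
  refine ⟨by linarith, ?_⟩
  rw [← gradient_log_eq_neg_smul_iff_eq_gaussDensity (hsmooth.differentiable one_ne_zero) hpos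
    hprob hs, ← integral_norm_gradient_log_add_smul_sq_mul_eq_zero_iff hsmooth hpos hJ hx2,
    hdefect]
  exact sub_eq_zero.symm

/-- **Isotropic Gaussian minimizes Fisher information under a trace constraint.**
For any `C¹`, strictly positive, mean-zero probability density `p` on `ℝ^d` with
positive-definite covariance `Σ` of trace `t`, square-integrable score, and decay
`xⱼ p(x) → 0` at infinity, one has `J(p) ≥ d²/t`, with equality iff `p` is the
density of `N(0, (t/d) I_d)`. -/
theorem fisher_information_min_trace_constraint
    {d : ℕ} (hd : 0 < d) (t : ℝ) (ht : 0 < t)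
    (p : EuclideanSpace ℝ (Fin d) → ℝ)
    (hsmooth : ContDiff ℝ 1 p) (hpos : ∀ x, 0 < p x)
    (hprob : (∫ x, p x) = 1)
    (S : Matrix (Fin d) (Fin d) ℝ) (hS : S.PosDef)
    (hmean : ∀ i, (∫ x : EuclideanSpace ℝ (Fin d), x i * p x) = 0)
    (hmeanInt : ∀ i, Integrable (fun x : EuclideanSpace ℝ (Fin d) => x i * p x))
    (hcov : ∀ i j, (∫ x : EuclideanSpace ℝ (Fin d), x i * x j * p x) = S i j)
    (hcovInt : ∀ i j, Integrable (fun x : EuclideanSpace ℝ (Fin d) => x i * x j * p x))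
    (htr : S.trace = t)
    (hJ : Integrable (fun x : EuclideanSpace ℝ (Fin d) =>
      ‖gradient (fun y => Real.log (p y)) x‖ ^ 2 * p x))
    (hdecay : ∀ j, Filter.Tendsto (fun x : EuclideanSpace ℝ (Fin d) => x j * p x)
      (Filter.cocompact _) (nhds 0)) :
    (∫ x, ‖gradient (fun y => Real.log (p y)) x‖ ^ 2 * p x) ≥ (d : ℝ) ^ 2 / t ∧
      ((∫ x, ‖gradient (fun y => Real.log (p y)) x‖ ^ 2 * p x) = (d : ℝ) ^ 2 / t ↔
        p = gaussDensity ((t / d) • (1 : Matrix (Fin d) (Fin d) ℝ))) :=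
  fisher_information_min_trace_constraint_general hd t ht p hsmooth hpos hprob S hmeanInt hcov
    hcovInt htr hJ
end

section
/- Pointwise bias of the radius-based ball-average (radial k-NN) regressor: let p : ℝ^d → ℝ be a three-times continuously differentiable probability density with bounded derivatives up to order 3, and let η : ℝ^d → ℝ be twice continuously differentiable with bounded derivatives up to order 2. Fix x ∈ ℝ^d with p(x) > 0 and set, for r > 0, 𝒩(r) = ∫_{B(x,r)} η(y) p(y) dy and 𝒟(r) = ∫_{B(x,r)} p(y) dy, where B(x,r) is the closed Euclidean ball of radius r centered at x. Then lim_{r → 0⁺} r^{−2} ( 𝒩(r)/𝒟(r) − η(x) ) = (1/(d+2)) ( ⟨∇η(x), ∇p(x)⟩ / p(x) + (1/2) Δη(x) ); i.e., the ball-average estimator's asymptotic bias is (r²/(d+2)) ( ∇η(x)·∇ log p(x) + Δη(x)/2 ) + o(r²). -/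
/-!
Both `𝒩(r)` and `𝒟(r)` are ball integrals of `C²` functions. Expanding `f(x + h)` to second
order and integrating over `B(0, r)`, the linear term vanishes by symmetry `h ↦ -h`, and by the
coordinate reflections and permutations `∫ hᵢ hⱼ = δᵢⱼ r² |B| / (d + 2)` (the diagonal value comes
from the polar-coordinate integral of `‖h‖²`), so the ball average of `f` is
`f x + r² Δf(x) / (2 (d + 2)) + o(r²)`. Applying this to `f = η p` and `f = p`, a first-order
expansion of the quotient and `Δ(η p) = η Δp + 2 ⟪∇η, ∇p⟫ + p Δη` give the limit.
-/

open MeasureTheory Filter BigOperators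

noncomputable def lapl {d : ℕ} (f : EuclideanSpace ℝ (Fin d) → ℝ)
    (x : EuclideanSpace ℝ (Fin d)) : ℝ :=
  ∑ i, fderiv ℝ (fun y => fderiv ℝ f y (EuclideanSpace.single i 1)) x
      (EuclideanSpace.single i 1)

open Metric Asymptotics Topology

section Moments

variable {E : Type*} [NormedAddCommGroup E] [NormedSpace ℝ E] [FiniteDimensional ℝ E]
  [MeasurableSpace E] [BorelSpace E]

lemma integral_closedBall_zero_norm_sq [Nontrivial E] (μ : Measure E) [μ.IsAddHaarMeasure]
    {r : ℝ} (hr : 0 ≤ r) :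
    ∫ z in closedBall (0 : E) r, ‖z‖ ^ 2 ∂μ =
      Module.finrank ℝ E / (Module.finrank ℝ E + 2) * r ^ 2 * μ.real (closedBall (0 : E) r) := by
  set n := Module.finrank ℝ E
  have hn : 0 < n := Module.finrank_pos
  have hradial : ∫ t in Set.Ioi (0 : ℝ), t ^ (n - 1) • (if t ≤ r then t ^ 2 else 0) =
      r ^ (n + 2) / (n + 2) := by
    have hpow : ∀ t ∈ Set.Ioi (0 : ℝ), t ^ (n - 1) • (if t ≤ r then t ^ 2 else 0) =
        (Set.Iic r).indicator (fun t => t ^ (n + 1)) t := by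
      intro t _
      by_cases htr : t ≤ r
      · simp only [htr, if_true, Set.indicator_of_mem (Set.mem_Iic.2 htr), smul_eq_mul, ← pow_add]
        congr 1
        omega
      · simp [htr]
    rw [setIntegral_congr_fun measurableSet_Ioi hpow, setIntegral_indicator measurableSet_Iic,
      Set.Ioi_inter_Iic, ← intervalIntegral.integral_of_le hr, integral_pow]
    push_cast
    ring
  calc ∫ z in closedBall (0 : E) r, ‖z‖ ^ 2 ∂μ
      = ∫ z, (fun t : ℝ => if t ≤ r then t ^ 2 else 0) ‖z‖ ∂μ := by
        rw [← integral_indicator measurableSet_closedBall]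
        congr 1 with z
        simp [Set.indicator, mem_closedBall, dist_zero_right]
    _ = _ := by
        rw [integral_fun_norm_addHaar μ (fun t : ℝ => if t ≤ r then t ^ 2 else 0), hradial,
          μ.addHaar_real_closedBall 0 hr, nsmul_eq_mul, smul_eq_mul]
        field_simp
        ring

end Moments

section Isometry

variable {E F : Type*} [NormedAddCommGroup E] [InnerProductSpace ℝ E] [FiniteDimensional ℝ E]
  [MeasurableSpace E] [BorelSpace E] [NormedAddCommGroup F] [NormedSpace ℝ F]

lemma setIntegral_closedBall_zero_comp_linearIsometryEquiv (e : E ≃ₗᵢ[ℝ] E) (g : E → F)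
    (r : ℝ) : ∫ z in closedBall (0 : E) r, g (e z) = ∫ z in closedBall (0 : E) r, g z := by
  have hpre : e ⁻¹' closedBall 0 r = closedBall 0 r := by
    ext z
    simp
  conv_lhs => rw [← hpre]
  exact e.measurePreserving.setIntegral_preimage_emb e.toHomeomorph.measurableEmbedding g _

lemma integral_closedBall_zero_of_odd {g : E → F} (hg : ∀ z, g (-z) = -g z) (r : ℝ) :
    ∫ z in closedBall (0 : E) r, g z = 0 := by
  have h := setIntegral_closedBall_zero_comp_linearIsometryEquiv (.neg ℝ) g r
  simp only [LinearIsometryEquiv.coe_neg, hg, integral_neg] at h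
  have h2 : (2 : ℝ) • ∫ z in closedBall (0 : E) r, g z = 0 := by
    rw [two_smul]
    nth_rewrite 1 [← h]
    exact neg_add_cancel _
  exact (smul_eq_zero.1 h2).resolve_left two_ne_zero

end Isometry

section Coordinates

variable {ι : Type*} [Fintype ι]

lemma integral_closedBall_zero_mul_coord_of_ne {i j : ι} (hij : i ≠ j) (r : ℝ) :
    ∫ z in closedBall (0 : EuclideanSpace ℝ ι) r, z i * z j = 0 := by
  classical
  let e : EuclideanSpace ℝ ι ≃ₗᵢ[ℝ] EuclideanSpace ℝ ι := LinearIsometryEquiv.piLpCongrRight 2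
    fun k => if k = i then LinearIsometryEquiv.neg ℝ else LinearIsometryEquiv.refl ℝ ℝ
  have h := setIntegral_closedBall_zero_comp_linearIsometryEquiv e (fun z => z i * z j) r
  simp [e, LinearIsometryEquiv.piLpCongrRight_apply, hij.symm, integral_neg] at h
  linarith

lemma integral_closedBall_zero_coord_sq_eq (i j : ι) (r : ℝ) :
    ∫ z in closedBall (0 : EuclideanSpace ℝ ι) r, z i ^ 2 =
      ∫ z in closedBall (0 : EuclideanSpace ℝ ι) r, z j ^ 2 := by
  classical
  have h := setIntegral_closedBall_zero_comp_linearIsometryEquiv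
    (LinearIsometryEquiv.piLpCongrLeft 2 ℝ ℝ (Equiv.swap i j)) (fun z => z i ^ 2) r
  simp [LinearIsometryEquiv.piLpCongrLeft_apply, Equiv.piCongrLeft'_apply] at h
  exact h.symm


lemma integral_closedBall_zero_coord_sq (i : ι) {r : ℝ} (hr : 0 ≤ r) :
    ∫ z in closedBall (0 : EuclideanSpace ℝ ι) r, z i ^ 2 =
      r ^ 2 / (Fintype.card ι + 2) * volume.real (closedBall (0 : EuclideanSpace ℝ ι) r) := by
  have : Nonempty ι := ⟨i⟩
  have hint : ∀ j : ι, IntegrableOn (fun z : EuclideanSpace ℝ ι => z j ^ 2)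
      (closedBall 0 r) := fun j =>
    ((EuclideanSpace.proj j).continuous.pow 2).continuousOn.integrableOn_compact
      (isCompact_closedBall _ _)
  have hsum : Fintype.card ι * ∫ z in closedBall (0 : EuclideanSpace ℝ ι) r, z i ^ 2 =
      ∫ z in closedBall (0 : EuclideanSpace ℝ ι) r, ‖z‖ ^ 2 := by
    simp_rw [EuclideanSpace.norm_sq_eq, Real.norm_eq_abs, sq_abs]
    rw [integral_finsetSum _ fun j _ => hint j,
      Finset.sum_congr rfl fun j _ => integral_closedBall_zero_coord_sq_eq j i r]
    simp
  rw [integral_closedBall_zero_norm_sq volume hr, finrank_euclideanSpace] at hsum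
  field_simp at hsum ⊢
  linear_combination hsum

lemma integral_closedBall_zero_apply_self [DecidableEq ι]
    (B : EuclideanSpace ℝ ι →L[ℝ] EuclideanSpace ℝ ι →L[ℝ] ℝ) {r : ℝ} (hr : 0 ≤ r) :
    ∫ z in closedBall (0 : EuclideanSpace ℝ ι) r, B z z =
      (∑ i, B (EuclideanSpace.single i 1) (EuclideanSpace.single i 1)) / (Fintype.card ι + 2) *
        r ^ 2 * volume.real (closedBall (0 : EuclideanSpace ℝ ι) r) := by
  set e : ι → EuclideanSpace ℝ ι := fun i => EuclideanSpace.single i 1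
  have hexpand : ∀ z : EuclideanSpace ℝ ι, B z z = ∑ i, ∑ j, B (e i) (e j) * (z i * z j) := by
    intro z
    conv_lhs => rw [← (EuclideanSpace.basisFun ι ℝ).sum_repr z]
    simp only [e, EuclideanSpace.basisFun_apply, EuclideanSpace.basisFun_repr, map_sum,
      map_smul, FunLike.coe_sum, Finset.sum_apply, FunLike.coe_smul,
      Pi.smul_apply, smul_eq_mul, Finset.mul_sum]
    rw [Finset.sum_comm]
    exact Finset.sum_congr rfl fun _ _ => Finset.sum_congr rfl fun _ _ => by ring
  have hint : ∀ i j : ι, IntegrableOn (fun z : EuclideanSpace ℝ ι => B (e i) (e j) * (z i * z j))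
      (closedBall 0 r) := fun i j =>
    (continuous_const.mul ((EuclideanSpace.proj i).continuous.mul
      (EuclideanSpace.proj j).continuous)).continuousOn.integrableOn_compact
      (isCompact_closedBall _ _)
  have hdiag : ∀ i j : ι,
      ∫ z in closedBall (0 : EuclideanSpace ℝ ι) r, B (e i) (e j) * (z i * z j) =
        if i = j then B (e i) (e i) * (r ^ 2 / (Fintype.card ι + 2) *
          volume.real (closedBall (0 : EuclideanSpace ℝ ι) r)) else 0 := by
    intro i j
    rw [integral_const_mul]
    split_ifs with hij
    · subst hij
      simp_rw [← sq]
      rw [integral_closedBall_zero_coord_sq i hr]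
    · rw [integral_closedBall_zero_mul_coord_of_ne hij, mul_zero]
  calc ∫ z in closedBall (0 : EuclideanSpace ℝ ι) r, B z z
      = ∫ z in closedBall (0 : EuclideanSpace ℝ ι) r, ∑ i, ∑ j, B (e i) (e j) * (z i * z j) := by
        congr 1 with z
        exact hexpand z
    _ = ∑ i, ∑ j, ∫ z in closedBall (0 : EuclideanSpace ℝ ι) r, B (e i) (e j) * (z i * z j) := by
        rw [integral_finsetSum _ fun i _ => integrable_finsetSum _ fun j _ => hint i j]
        exact Finset.sum_congr rfl fun i _ => integral_finsetSum _ fun j _ => hint i j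
    _ = _ := by
        simp only [hdiag, Finset.sum_ite_eq, Finset.mem_univ, if_true, Finset.sum_div,
          Finset.sum_mul]
        exact Finset.sum_congr rfl fun _ _ => by ring

end Coordinates

section Taylor

variable {E F : Type*} [NormedAddCommGroup E] [NormedSpace ℝ E] [NormedAddCommGroup F]
  [NormedSpace ℝ F]

noncomputable def secondOrderTaylorRemainder (f : E → F) (x h : E) : F :=
  f (x + h) - f x - fderiv ℝ f x h - (2 : ℝ)⁻¹ • fderiv ℝ (fderiv ℝ f) x h h

lemma hasFDerivAt_half_apply_self {B : E →L[ℝ] E →L[ℝ] F} (hB : ∀ u v, B u v = B v u) (k : E) :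
    HasFDerivAt (fun h => (2 : ℝ)⁻¹ • B h h) (B k) k := by
  have hquad := B.hasFDerivAt_of_bilinear (hasFDerivAt_id k) (hasFDerivAt_id k)
  refine (hquad.const_smul (2 : ℝ)⁻¹).congr_fderiv ?_
  ext v
  simp [hB v k, ← add_smul]
  norm_num

lemma ContDiff.differentiable_fderiv {f : E → F} {n : WithTop ℕ∞} (hf : ContDiff ℝ n f)
    (hn : 2 ≤ n) : Differentiable ℝ (fderiv ℝ f) :=
  (hf.fderiv_right (m := 1) (by simpa [one_add_one_eq_two] using hn)).differentiable one_ne_zero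

lemma ContDiffAt.isLittleO_secondOrderTaylorRemainder {f : E → F} {x : E}
    (hf : ContDiffAt ℝ 2 f x) :
    secondOrderTaylorRemainder f x =o[𝓝 0] fun h => ‖h‖ ^ 2 := by
  set B := fderiv ℝ (fderiv ℝ f) x
  have hsymm : ∀ u v, B u v = B v u := hf.isSymmSndFDerivAt (by simp)
  have hB : HasFDerivAt (fderiv ℝ f) B x :=
    ((hf.fderiv_right (m := 1) le_rfl).differentiableAt one_ne_zero).hasFDerivAt
  have hnear : ∀ᶠ h in 𝓝 (0 : E), DifferentiableAt ℝ f (x + h) := by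
    have := (hf.eventually (by simp)).mono fun y hy => hy.differentiableAt two_ne_zero
    rw [← map_add_left_nhds_zero x] at this
    exact this
  rw [isLittleO_iff]
  intro c hc
  obtain ⟨δ, hδ, hball⟩ := Metric.eventually_nhds_iff_ball.1
    (hnear.and ((hasFDerivAt_iff_isLittleO_nhds_zero.1 hB).def hc))
  filter_upwards [Metric.ball_mem_nhds (0 : E) hδ] with h hh
  -- mean value inequality on `closedBall 0 ‖h‖`, where the remainder has derivative
  -- `Df(x + k) - Df(x) - D²f(x) k`, of norm at most `c ‖k‖`
  have hderiv : ∀ k ∈ closedBall (0 : E) ‖h‖, HasFDerivAt (secondOrderTaylorRemainder f x)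
      (fderiv ℝ f (x + k) - fderiv ℝ f x - B k) k := by
    intro k hk
    have hk' : k ∈ ball (0 : E) δ := closedBall_subset_ball (mem_ball_zero_iff.1 hh) hk
    have hfk := ((hball k hk').1.hasFDerivAt).comp k ((hasFDerivAt_id k).const_add x)
    convert ((hfk.sub_const (f x)).sub (fderiv ℝ f x).hasFDerivAt).sub
      (hasFDerivAt_half_apply_self hsymm k) using 1
    · rfl
    · rw [ContinuousLinearMap.comp_id]
  have hbound : ∀ k ∈ closedBall (0 : E) ‖h‖, ‖fderiv ℝ f (x + k) - fderiv ℝ f x - B k‖ ≤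
      c * ‖h‖ := by
    intro k hk
    have hk' : k ∈ ball (0 : E) δ := closedBall_subset_ball (mem_ball_zero_iff.1 hh) hk
    exact (hball k hk').2.trans (mul_le_mul_of_nonneg_left (mem_closedBall_zero_iff.1 hk) hc.le)
  have hmvt := (convex_closedBall (0 : E) ‖h‖).norm_image_sub_le_of_norm_hasFDerivWithin_le
    (fun k hk => (hderiv k hk).hasFDerivWithinAt) hbound (mem_closedBall_self (norm_nonneg h))
    (mem_closedBall_zero_iff.2 le_rfl)
  simpa [secondOrderTaylorRemainder, pow_two, mul_assoc] using hmvt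

end Taylor

section Remainder

variable {E F : Type*} [NormedAddCommGroup E] [NormedAddCommGroup F] [NormedSpace ℝ F]
  [MeasurableSpace E]

lemma tendsto_setIntegral_closedBall_div_of_isLittleO [ProperSpace E] (μ : Measure E)
    [IsFiniteMeasureOnCompacts μ] {R : E → F} (hR : R =o[𝓝 0] fun h => ‖h‖ ^ 2) :
    Tendsto (fun r => (r ^ 2 * μ.real (closedBall (0 : E) r))⁻¹ • ∫ h in closedBall 0 r, R h ∂μ)
      (𝓝[>] 0) (𝓝 0) := by
  rw [Metric.tendsto_nhds]
  intro ε hε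
  obtain ⟨δ, hδ, hsmall⟩ := Metric.eventually_nhds_iff_ball.1 (hR.def (half_pos hε))
  filter_upwards [Ioo_mem_nhdsGT hδ] with r ⟨hr, hrδ⟩
  set c := r ^ 2 * μ.real (closedBall (0 : E) r)
  have hc : 0 ≤ c := by positivity
  have hint : ‖∫ h in closedBall 0 r, R h ∂μ‖ ≤ ε / 2 * c := by
    rw [← mul_assoc]
    refine norm_setIntegral_le_of_norm_le_const measure_closedBall_lt_top fun h hh => ?_
    have hh' : ‖h‖ ≤ r := mem_closedBall_zero_iff.1 hh
    calc ‖R h‖ ≤ ε / 2 * ‖‖h‖ ^ 2‖ := hsmall h (closedBall_subset_ball hrδ hh)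
      _ ≤ ε / 2 * r ^ 2 := by
        rw [Real.norm_of_nonneg (by positivity)]
        gcongr
  rw [dist_zero_right, norm_smul, norm_inv, Real.norm_of_nonneg hc]
  calc c⁻¹ * ‖∫ h in closedBall 0 r, R h ∂μ‖ ≤ c⁻¹ * (ε / 2 * c) := by gcongr
    _ ≤ ε / 2 := by
        rcases hc.eq_or_lt with h0 | hpos
        · rw [← h0, inv_zero, zero_mul]
          exact (half_pos hε).le
        · rw [mul_comm, mul_assoc, mul_inv_cancel₀ hpos.ne', mul_one]
    _ < ε := half_lt_self hε

end Remainder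

section Laplacian

lemma inner_gradient_gradient_eq_sum {E ι : Type*} [NormedAddCommGroup E]
    [InnerProductSpace ℝ E] [CompleteSpace E] [Fintype ι] (b : OrthonormalBasis ι ℝ E)
    (f g : E → ℝ) (x : E) :
    inner ℝ (gradient f x) (gradient g x) = ∑ i, fderiv ℝ f x (b i) * fderiv ℝ g x (b i) := by
  rw [← b.sum_inner_mul_inner]
  simp [real_inner_comm (b _)]

lemma fderiv_fderiv_mul_apply {E : Type*} [NormedAddCommGroup E] [NormedSpace ℝ E]
    {f g : E → ℝ} {x : E} (hf : Differentiable ℝ f) (hg : Differentiable ℝ g)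
    (hf' : DifferentiableAt ℝ (fderiv ℝ f) x) (hg' : DifferentiableAt ℝ (fderiv ℝ g) x) (v : E) :
    fderiv ℝ (fun y => fderiv ℝ (fun z => f z * g z) y v) x v =
      f x * fderiv ℝ (fun y => fderiv ℝ g y v) x v + 2 * (fderiv ℝ f x v * fderiv ℝ g x v) +
        g x * fderiv ℝ (fun y => fderiv ℝ f y v) x v := by
  have hfv : DifferentiableAt ℝ (fun y => fderiv ℝ f y v) x :=
    hf'.clm_apply (differentiableAt_const v)
  have hgv : DifferentiableAt ℝ (fun y => fderiv ℝ g y v) x :=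
    hg'.clm_apply (differentiableAt_const v)
  have hprod : (fun y => fderiv ℝ (fun z => f z * g z) y v) =
      fun y => f y * fderiv ℝ g y v + g y * fderiv ℝ f y v := by
    ext y
    simp [fderiv_fun_mul (hf y) (hg y), smul_eq_mul]
  have hsum : HasFDerivAt (fun y => f y * fderiv ℝ g y v + g y * fderiv ℝ f y v)
      ((f x • fderiv ℝ (fun y => fderiv ℝ g y v) x + fderiv ℝ g x v • fderiv ℝ f x) +
        (g x • fderiv ℝ (fun y => fderiv ℝ f y v) x + fderiv ℝ f x v • fderiv ℝ g x)) x :=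
    ((hf x).hasFDerivAt.mul hgv.hasFDerivAt).add ((hg x).hasFDerivAt.mul hfv.hasFDerivAt)
  rw [hprod, hsum.fderiv]
  simp only [add_apply, smul_apply, smul_eq_mul]
  ring

variable {d : ℕ}

lemma lapl_eq_sum_fderiv_fderiv {f : EuclideanSpace ℝ (Fin d) → ℝ}
    {x : EuclideanSpace ℝ (Fin d)} (hf : DifferentiableAt ℝ (fderiv ℝ f) x) :
    lapl f x = ∑ i, fderiv ℝ (fderiv ℝ f) x (EuclideanSpace.single i 1)
      (EuclideanSpace.single i 1) := by
  unfold lapl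
  refine Finset.sum_congr rfl fun i _ => ?_
  rw [fderiv_clm_apply hf (differentiableAt_const _)]
  simp

lemma lapl_mul {f g : EuclideanSpace ℝ (Fin d) → ℝ} {x : EuclideanSpace ℝ (Fin d)}
    (hf : Differentiable ℝ f) (hg : Differentiable ℝ g)
    (hf' : DifferentiableAt ℝ (fderiv ℝ f) x) (hg' : DifferentiableAt ℝ (fderiv ℝ g) x) :
    lapl (fun y => f y * g y) x =
      f x * lapl g x + 2 * inner ℝ (gradient f x) (gradient g x) + g x * lapl f x := by
  rw [inner_gradient_gradient_eq_sum (EuclideanSpace.basisFun (Fin d) ℝ)]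
  simp only [lapl, fderiv_fderiv_mul_apply hf hg hf' hg', Finset.sum_add_distrib, Finset.mul_sum,
    EuclideanSpace.basisFun_apply]

end Laplacian

lemma measureReal_closedBall_pos {E : Type*} [MetricSpace E] [ProperSpace E] [MeasurableSpace E]
    [OpensMeasurableSpace E] (μ : Measure E) [μ.IsOpenPosMeasure] [IsFiniteMeasureOnCompacts μ]
    (x : E) {r : ℝ} (hr : 0 < r) : 0 < μ.real (closedBall x r) :=
  ENNReal.toReal_pos (measure_closedBall_pos μ x hr).ne' measure_closedBall_lt_top.ne

section BallAverage

variable {ι : Type*} [Fintype ι]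

lemma setIntegral_closedBall_eq_setIntegral_closedBall_zero {F : Type*} [NormedAddCommGroup F]
    [NormedSpace ℝ F] (f : EuclideanSpace ℝ ι → F) (x : EuclideanSpace ℝ ι) (r : ℝ) :
    ∫ y in closedBall x r, f y = ∫ h in closedBall 0 r, f (x + h) := by
  have hpre : (x + ·) ⁻¹' closedBall x r = closedBall 0 r := by
    ext h
    simp
  rw [← hpre, (measurePreserving_add_left volume x).setIntegral_preimage_emb
    (measurableEmbedding_addLeft x)]

lemma integral_closedBall_eq_add_integral_secondOrderTaylorRemainder [DecidableEq ι]
    {f : EuclideanSpace ℝ ι → ℝ} (hf : Continuous f) (x : EuclideanSpace ℝ ι) {r : ℝ}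
    (hr : 0 ≤ r) :
    ∫ y in closedBall x r, f y =
      (f x + (∑ i, fderiv ℝ (fderiv ℝ f) x (EuclideanSpace.single i 1)
          (EuclideanSpace.single i 1)) / (2 * (Fintype.card ι + 2)) * r ^ 2) *
        volume.real (closedBall (0 : EuclideanSpace ℝ ι) r) +
      ∫ h in closedBall 0 r, secondOrderTaylorRemainder f x h := by
  set L := fderiv ℝ f x
  set B := fderiv ℝ (fderiv ℝ f) x
  have hint : ∀ {g : EuclideanSpace ℝ ι → ℝ}, Continuous g → IntegrableOn g (closedBall 0 r) :=
    fun hg => hg.continuousOn.integrableOn_compact (isCompact_closedBall _ _)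
  have hsplit : ∀ h,
      f (x + h) = f x + L h + (2 : ℝ)⁻¹ * B h h + secondOrderTaylorRemainder f x h := by
    intro h
    simp only [secondOrderTaylorRemainder, smul_eq_mul, L, B]
    ring
  have hR : Continuous (secondOrderTaylorRemainder f x) := by
    unfold secondOrderTaylorRemainder
    fun_prop
  have hodd : ∫ h in closedBall (0 : EuclideanSpace ℝ ι) r, L h = 0 :=
    integral_closedBall_zero_of_odd (fun h => map_neg L h) r
  rw [setIntegral_closedBall_eq_setIntegral_closedBall_zero, funext hsplit,
    integral_add (hint (by fun_prop)) (hint hR),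
    integral_add (hint (by fun_prop)) (hint (by fun_prop)),
    integral_add (hint continuous_const) (hint L.continuous), hodd, integral_const_mul,
    integral_closedBall_zero_apply_self B hr, setIntegral_const, smul_eq_mul]
  field_simp
  ring

theorem tendsto_integral_closedBall_div_volume_sub_div_sq {d : ℕ}
    {f : EuclideanSpace ℝ (Fin d) → ℝ} (hf : ContDiff ℝ 2 f) (x : EuclideanSpace ℝ (Fin d)) :
    Tendsto (fun r => ((∫ y in closedBall x r, f y) / volume.real (closedBall x r) - f x) / r ^ 2)
      (𝓝[>] 0) (𝓝 (lapl f x / (2 * (d + 2)))) := by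
  have hrem := tendsto_setIntegral_closedBall_div_of_isLittleO volume
    (hf.contDiffAt (x := x)).isLittleO_secondOrderTaylorRemainder
  rw [lapl_eq_sum_fderiv_fderiv (hf.differentiable_fderiv le_rfl x)]
  have hlim := (tendsto_const_nhds (x := (∑ i, fderiv ℝ (fderiv ℝ f) x (EuclideanSpace.single i 1)
    (EuclideanSpace.single i 1)) / (2 * (d + 2)))).add hrem
  rw [add_zero] at hlim
  refine hlim.congr' ?_
  filter_upwards [self_mem_nhdsWithin] with r (hr : 0 < r)
  have hV := measureReal_closedBall_pos (volume : Measure (EuclideanSpace ℝ (Fin d))) 0 hr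
  rw [integral_closedBall_eq_add_integral_secondOrderTaylorRemainder hf.continuous x hr.le,
    Measure.addHaar_real_closedBall_center volume x r, Fintype.card_fin, smul_eq_mul]
  field_simp
  ring

end BallAverage

lemma tendsto_div_sub_div_div {α : Type*} {l : Filter α} {a b s : α → ℝ} {a₀ b₀ A B : ℝ}
    (hs : Tendsto s l (𝓝 0)) (hs₀ : ∀ᶠ t in l, s t ≠ 0)
    (ha : Tendsto (fun t => (a t - a₀) / s t) l (𝓝 A))
    (hb : Tendsto (fun t => (b t - b₀) / s t) l (𝓝 B)) (hb₀ : b₀ ≠ 0) :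
    Tendsto (fun t => (a t / b t - a₀ / b₀) / s t) l (𝓝 ((A - a₀ / b₀ * B) / b₀)) := by
  have hb_lim : Tendsto b l (𝓝 b₀) := by
    have h := tendsto_const_nhds (x := b₀).add (hs.mul hb)
    rw [zero_mul, add_zero] at h
    refine h.congr' ?_
    filter_upwards [hs₀] with t ht
    field_simp
    ring
  refine ((ha.sub (tendsto_const_nhds.mul hb)).div hb_lim hb₀).congr' ?_
  filter_upwards [hs₀, hb_lim.eventually_ne hb₀] with t ht hbt
  simp only [Pi.div_apply]
  field_simp
  ring

theorem knn_pointwise_bias_general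
    {d : ℕ} (p η : EuclideanSpace ℝ (Fin d) → ℝ)
    (hp : ContDiff ℝ 3 p)
    (hη : ContDiff ℝ 2 η)
    (x : EuclideanSpace ℝ (Fin d)) (hx : 0 < p x) :
    Tendsto (fun r : ℝ =>
        ((∫ y in Metric.closedBall x r, η y * p y) / (∫ y in Metric.closedBall x r, p y)
          - η x) / r ^ 2)
      (nhdsWithin 0 (Set.Ioi 0))
      (nhds ((1 / ((d : ℝ) + 2)) *
        ((inner ℝ (gradient η x) (gradient p x) : ℝ) / p x + (1 / 2) * lapl η x))) := by
  have hp2 : ContDiff ℝ 2 p := hp.of_le (by norm_num)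
  have hsq : Tendsto (fun r : ℝ => r ^ 2) (𝓝[>] 0) (𝓝 0) :=
    ((continuous_pow 2).tendsto' 0 0 (zero_pow two_ne_zero)).mono_left nhdsWithin_le_nhds
  have hsq₀ : ∀ᶠ r : ℝ in 𝓝[>] 0, r ^ 2 ≠ 0 :=
    eventually_nhdsWithin_of_forall fun r (hr : 0 < r) => pow_ne_zero 2 hr.ne'
  have hlim := tendsto_div_sub_div_div hsq hsq₀
    (tendsto_integral_closedBall_div_volume_sub_div_sq (hη.mul hp2) x)
    (tendsto_integral_closedBall_div_volume_sub_div_sq hp2 x) hx.ne'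
  have hval : (lapl (fun y => η y * p y) x / (2 * (d + 2)) -
      η x * p x / p x * (lapl p x / (2 * (d + 2)))) / p x =
      1 / ((d : ℝ) + 2) * (inner ℝ (gradient η x) (gradient p x) / p x + 1 / 2 * lapl η x) := by
    rw [lapl_mul (hη.differentiable two_ne_zero) (hp2.differentiable two_ne_zero)
      (hη.differentiable_fderiv le_rfl x) (hp2.differentiable_fderiv le_rfl x)]
    field_simp
    ring
  rw [← hval]
  refine hlim.congr' ?_
  filter_upwards [self_mem_nhdsWithin] with r (hr : 0 < r)
  rw [div_div_div_cancel_right₀ (measureReal_closedBall_pos volume x hr).ne',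
    mul_div_cancel_right₀ _ hx.ne']

/-- **Pointwise bias of the radius-based ball-average (radial k-NN) regressor.**
For a `C³` density `p` with bounded derivatives up to order 3 and a `C²` target `η`
with bounded derivatives up to order 2, at any `x` with `p(x) > 0`,
`(𝒩(r)/𝒟(r) − η(x))/r² → (1/(d+2)) (⟪∇η(x), ∇p(x)⟫/p(x) + Δη(x)/2)` as `r → 0⁺`,
where `𝒩(r) = ∫_{B(x,r)} η p` and `𝒟(r) = ∫_{B(x,r)} p`. -/
theorem knn_pointwise_bias
    {d : ℕ} (p η : EuclideanSpace ℝ (Fin d) → ℝ)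
    (hp : ContDiff ℝ 3 p)
    (hpb : ∀ n : ℕ, n ≤ 3 → ∃ C, ∀ y, ‖iteratedFDeriv ℝ n p y‖ ≤ C)
    (hpnn : ∀ y, 0 ≤ p y) (hpint : (∫ y, p y) = 1)
    (hη : ContDiff ℝ 2 η)
    (hηb : ∀ n : ℕ, n ≤ 2 → ∃ C, ∀ y, ‖iteratedFDeriv ℝ n η y‖ ≤ C)
    (x : EuclideanSpace ℝ (Fin d)) (hx : 0 < p x) :
    Tendsto (fun r : ℝ =>
        ((∫ y in Metric.closedBall x r, η y * p y) / (∫ y in Metric.closedBall x r, p y)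
          - η x) / r ^ 2)
      (nhdsWithin 0 (Set.Ioi 0))
      (nhds ((1 / ((d : ℝ) + 2)) *
        ((inner ℝ (gradient η x) (gradient p x) : ℝ) / p x + (1 / 2) * lapl η x))) :=
  knn_pointwise_bias_general p η hp hη x hx
end
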